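/- Let λ ∈ (0,1), α < 0, a, b ≥ 0 and δ > 0. Then M_α(a,b;λ) + δ ≤ M_α(a+δ, b+δ; λ) ≤ M_α(a,b;λ) + (min(1−λ, λ))^{1/α} · δ. (Estimate (3.11): the map s ↦ M_α(a+s, b+s; λ) has derivative between 1 and min(1−λ,λ)^{1/α}.) -/

import Mathlib

/-- The λ-weighted α-power mean of two nonnegative numbers. -/
noncomputable def powerMean (α lam a b : ℝ) : ℝ :=
  if 0 < a ∧ 0 < b then
    if α = 0 then a ^ (1 - lam) * b ^ lam
    else ((1 - lam) * a ^ α + lam * b ^ α) ^ (1 / α)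
  else 0

/-! For `α < 0` the power mean `M` is monotone and positively homogeneous, and its superlevel
sets are convex because `t ↦ t ^ α` is; hence `M` is superadditive, and `M(δ, δ) = δ` gives the
lower bound. For the upper bound, dropping one term of the weighted sum gives
`M(a, b) ≤ c · min(a, b)` with `c = min(1 - λ, λ) ^ (1 / α)`, so `(a + δ, b + δ)` lies below
`(1 + cδ / M(a, b)) · (a, b)` coordinatewise, and monotonicity and homogeneity finish. -/

open Real Set

lemma convexOn_rpow_of_nonpos {p : ℝ} (hp : p ≤ 0) : ConvexOn ℝ (Ioi 0) fun x : ℝ ↦ x ^ p := by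
  have hlog : ConvexOn ℝ (Ioi 0) fun x : ℝ ↦ log x * p := by
    refine (strictConcaveOn_log_Ioi.concaveOn.neg.smul (neg_nonneg.mpr hp)).congr fun x _ ↦ ?_
    simp only [Pi.neg_apply, smul_eq_mul]
    ring
  refine ⟨convex_Ioi 0, fun x hx y hy s t hs ht hst ↦ ?_⟩
  have hxy : 0 < s * x + t * y := convex_Ioi 0 hx hy hs ht hst
  change (s * x + t * y) ^ p ≤ s * x ^ p + t * y ^ p
  rw [rpow_def_of_pos hx, rpow_def_of_pos hy, rpow_def_of_pos hxy]
  calc exp (log (s * x + t * y) * p) ≤ exp (s * (log x * p) + t * (log y * p)) :=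
        exp_le_exp.mpr (by simpa only [smul_eq_mul] using hlog.2 hx hy hs ht hst)
    _ ≤ s * exp (log x * p) + t * exp (log y * p) := by
        simpa only [smul_eq_mul] using convexOn_exp.2 (mem_univ _) (mem_univ _) hs ht hst

section

variable {α lam a b a' b' : ℝ}

lemma powerMean_of_pos (hα : α ≠ 0) (ha : 0 < a) (hb : 0 < b) :
    powerMean α lam a b = ((1 - lam) * a ^ α + lam * b ^ α) ^ (1 / α) := by
  rw [powerMean, if_pos ⟨ha, hb⟩, if_neg hα]

lemma powerMean_of_not_pos (h : ¬(0 < a ∧ 0 < b)) : powerMean α lam a b = 0 := by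
  rw [powerMean, if_neg h]

lemma powerMean_pos (hlam : lam ∈ Ioo 0 1) (ha : 0 < a) (hb : 0 < b) :
    0 < powerMean α lam a b := by
  obtain ⟨hlam₀, hlam₁⟩ := hlam
  have : 0 < 1 - lam := sub_pos.mpr hlam₁
  rw [powerMean, if_pos ⟨ha, hb⟩]
  split_ifs <;> positivity

lemma powerMean_nonneg (hlam : lam ∈ Icc 0 1) : 0 ≤ powerMean α lam a b := by
  obtain ⟨hlam₀, hlam₁⟩ := hlam
  have : 0 ≤ 1 - lam := sub_nonneg.mpr hlam₁
  by_cases hab : 0 < a ∧ 0 < b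
  · obtain ⟨ha, hb⟩ := hab
    rw [powerMean, if_pos ⟨ha, hb⟩]
    split_ifs <;> positivity
  · rw [powerMean_of_not_pos hab]

lemma powerMean_self {x : ℝ} (hx : 0 ≤ x) : powerMean α lam x x = x := by
  rcases hx.eq_or_lt with rfl | hx
  · exact powerMean_of_not_pos fun h ↦ h.1.false
  rw [powerMean, if_pos ⟨hx, hx⟩]
  split_ifs with hα
  · rw [← rpow_add hx, sub_add_cancel, rpow_one]
  · rw [← add_mul, sub_add_cancel, one_mul, ← rpow_mul hx.le, mul_one_div_cancel hα, rpow_one]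

lemma powerMean_comm : powerMean α lam a b = powerMean α (1 - lam) b a := by
  simp only [powerMean, sub_sub_cancel, and_comm (a := 0 < a), add_comm ((1 - lam) * _),
    mul_comm (a ^ (1 - lam))]

lemma powerMean_mul (hlam : lam ∈ Icc 0 1) {k : ℝ} (hk : 0 < k) :
    powerMean α lam (k * a) (k * b) = k * powerMean α lam a b := by
  by_cases hab : 0 < a ∧ 0 < b
  · obtain ⟨ha, hb⟩ := hab
    have : 0 ≤ 1 - lam := sub_nonneg.mpr hlam.2
    have := hlam.1
    rw [powerMean, powerMean, if_pos (⟨mul_pos hk ha, mul_pos hk hb⟩ : 0 < k * a ∧ 0 < k * b),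
      if_pos (⟨ha, hb⟩ : 0 < a ∧ 0 < b)]
    split_ifs with hα
    · rw [mul_rpow hk.le ha.le, mul_rpow hk.le hb.le, mul_mul_mul_comm, ← rpow_add hk,
        sub_add_cancel, rpow_one]
    · rw [mul_rpow hk.le ha.le, mul_rpow hk.le hb.le,
        show (1 - lam) * (k ^ α * a ^ α) + lam * (k ^ α * b ^ α)
          = k ^ α * ((1 - lam) * a ^ α + lam * b ^ α) by ring,
        mul_rpow (by positivity) (by positivity), ← rpow_mul hk.le, mul_one_div_cancel hα,
        rpow_one]
  · rw [powerMean_of_not_pos hab, powerMean_of_not_pos, mul_zero]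
    simpa only [mul_pos_iff_of_pos_left hk] using hab

lemma powerMean_div (hlam : lam ∈ Icc 0 1) {k : ℝ} (hk : 0 < k) :
    powerMean α lam (a / k) (b / k) = powerMean α lam a b / k := by
  rw [div_eq_inv_mul, div_eq_inv_mul, powerMean_mul hlam (inv_pos.mpr hk), inv_mul_eq_div]

lemma powerMean_mono (hα : α < 0) (hlam : lam ∈ Ioo 0 1) (haa' : a ≤ a') (hbb' : b ≤ b') :
    powerMean α lam a b ≤ powerMean α lam a' b' := by
  by_cases hab : 0 < a ∧ 0 < b
  · obtain ⟨ha, hb⟩ := hab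
    have ha' := ha.trans_le haa'
    have hb' := hb.trans_le hbb'
    have : 0 < 1 - lam := sub_pos.mpr hlam.2
    have := hlam.1
    rw [powerMean_of_pos hα.ne ha hb, powerMean_of_pos hα.ne ha' hb']
    refine rpow_le_rpow_of_nonpos (by positivity) ?_ (one_div_neg.mpr hα).le
    gcongr (1 - lam) * ?_ + lam * ?_
    · exact rpow_le_rpow_of_nonpos ha haa' hα.le
    · exact rpow_le_rpow_of_nonpos hb hbb' hα.le
  · rw [powerMean_of_not_pos hab]
    exact powerMean_nonneg (Ioo_subset_Icc_self hlam)

lemma one_le_powerMean_iff (hα : α < 0) (hlam : lam ∈ Ioo 0 1) (ha : 0 < a) (hb : 0 < b) :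
    1 ≤ powerMean α lam a b ↔ (1 - lam) * a ^ α + lam * b ^ α ≤ 1 := by
  have : 0 < 1 - lam := sub_pos.mpr hlam.2
  have := hlam.1
  have hS : 0 < (1 - lam) * a ^ α + lam * b ^ α := by positivity
  rw [powerMean_of_pos hα.ne ha hb]
  constructor
  · intro h
    simpa only [one_div, rpow_inv_rpow hS.le hα.ne] using rpow_le_one_of_one_le_of_nonpos h hα.le
  · exact fun h ↦ one_le_rpow_of_pos_of_le_one_of_nonpos hS h (one_div_neg.mpr hα).le

lemma one_le_powerMean_convex_combination (hα : α < 0) (hlam : lam ∈ Ioo 0 1)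
    (ha : 0 < a) (hb : 0 < b) (ha' : 0 < a') (hb' : 0 < b')
    (h : 1 ≤ powerMean α lam a b) (h' : 1 ≤ powerMean α lam a' b')
    {s t : ℝ} (hs : 0 ≤ s) (ht : 0 ≤ t) (hst : s + t = 1) :
    1 ≤ powerMean α lam (s * a + t * a') (s * b + t * b') := by
  have : 0 < 1 - lam := sub_pos.mpr hlam.2
  have := hlam.1
  have hconv := (convexOn_rpow_of_nonpos hα.le).2
  have hA : (s * a + t * a') ^ α ≤ s * a ^ α + t * a' ^ α := hconv ha ha' hs ht hst
  have hB : (s * b + t * b') ^ α ≤ s * b ^ α + t * b' ^ α := hconv hb hb' hs ht hst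
  rw [one_le_powerMean_iff hα hlam ha hb] at h
  rw [one_le_powerMean_iff hα hlam ha' hb'] at h'
  have hsa : 0 < s * a + t * a' := convex_Ioi (0 : ℝ) ha ha' hs ht hst
  have hsb : 0 < s * b + t * b' := convex_Ioi (0 : ℝ) hb hb' hs ht hst
  rw [one_le_powerMean_iff hα hlam hsa hsb]
  nlinarith [mul_le_mul_of_nonneg_left hA this.le, mul_le_mul_of_nonneg_left hB hlam.1.le,
    mul_le_mul_of_nonneg_left h hs, mul_le_mul_of_nonneg_left h' ht]

lemma powerMean_le_min_rpow_mul_left (hα : α < 0) (hlam : lam ∈ Ioo 0 1) (ha : 0 < a)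
    (hb : 0 < b) : powerMean α lam a b ≤ min (1 - lam) lam ^ (1 / α) * a := by
  have hlam₁ : 0 < 1 - lam := sub_pos.mpr hlam.2
  have := hlam.1
  have h1α : 1 / α ≤ 0 := (one_div_neg.mpr hα).le
  calc powerMean α lam a b ≤ ((1 - lam) * a ^ α) ^ (1 / α) := by
        rw [powerMean_of_pos hα.ne ha hb]
        exact rpow_le_rpow_of_nonpos (by positivity) (le_add_of_nonneg_right (by positivity)) h1α
    _ = (1 - lam) ^ (1 / α) * a := by
        rw [mul_rpow hlam₁.le (by positivity), ← rpow_mul ha.le, mul_one_div_cancel hα.ne, rpow_one]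
    _ ≤ min (1 - lam) lam ^ (1 / α) * a := by
        gcongr ?_ * a
        exact rpow_le_rpow_of_nonpos (lt_min hlam₁ hlam.1) (min_le_left _ _) h1α

lemma powerMean_le_min_rpow_mul_right (hα : α < 0) (hlam : lam ∈ Ioo 0 1) (ha : 0 < a)
    (hb : 0 < b) : powerMean α lam a b ≤ min (1 - lam) lam ^ (1 / α) * b := by
  have h := powerMean_le_min_rpow_mul_left hα ⟨sub_pos.mpr hlam.2, sub_lt_self 1 hlam.1⟩ hb ha
  rwa [sub_sub_cancel, min_comm, ← powerMean_comm] at h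

lemma powerMean_add_powerMean_le_of_pos (hα : α < 0) (hlam : lam ∈ Ioo 0 1) (ha : 0 < a)
    (hb : 0 < b) (ha' : 0 < a') (hb' : 0 < b') :
    powerMean α lam a b + powerMean α lam a' b' ≤ powerMean α lam (a + a') (b + b') := by
  have hlam' := Ioo_subset_Icc_self hlam
  set A := powerMean α lam a b
  set B := powerMean α lam a' b'
  have hA : 0 < A := powerMean_pos hlam ha hb
  have hB : 0 < B := powerMean_pos hlam ha' hb'
  have h₁ : 1 ≤ powerMean α lam (a / A) (b / A) := by rw [powerMean_div hlam' hA, div_self hA.ne']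
  have h₂ : 1 ≤ powerMean α lam (a' / B) (b' / B) := by rw [powerMean_div hlam' hB, div_self hB.ne']
  have key := one_le_powerMean_convex_combination hα hlam (by positivity) (by positivity)
    (by positivity) (by positivity) h₁ h₂ (s := A / (A + B)) (t := B / (A + B)) (by positivity)
    (by positivity) (by field_simp)
  have hcomb : ∀ x y : ℝ, A / (A + B) * (x / A) + B / (A + B) * (y / B) = (x + y) / (A + B) := by
    intro x y
    field_simp
  rwa [hcomb, hcomb, powerMean_div hlam' (by positivity), one_le_div (by positivity)] at key

lemma powerMean_add_powerMean_le (hα : α < 0) (hlam : lam ∈ Ioo 0 1) (ha : 0 ≤ a)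
    (hb : 0 ≤ b) (ha' : 0 ≤ a') (hb' : 0 ≤ b') :
    powerMean α lam a b + powerMean α lam a' b' ≤ powerMean α lam (a + a') (b + b') := by
  by_cases hab : 0 < a ∧ 0 < b
  · by_cases hab' : 0 < a' ∧ 0 < b'
    · exact powerMean_add_powerMean_le_of_pos hα hlam hab.1 hab.2 hab'.1 hab'.2
    · rw [powerMean_of_not_pos hab', add_zero]
      exact powerMean_mono hα hlam (le_add_of_nonneg_right ha') (le_add_of_nonneg_right hb')
  · rw [powerMean_of_not_pos hab, zero_add]
    exact powerMean_mono hα hlam (le_add_of_nonneg_left ha) (le_add_of_nonneg_left hb)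

lemma powerMean_shift_le_of_le_mul (hα : α < 0) (hlam : lam ∈ Ioo 0 1) (ha : 0 < a) (hb : 0 < b)
    {c δ : ℝ} (hδ : 0 ≤ δ) (hca : powerMean α lam a b ≤ c * a)
    (hcb : powerMean α lam a b ≤ c * b) :
    powerMean α lam (a + δ) (b + δ) ≤ powerMean α lam a b + c * δ := by
  set M := powerMean α lam a b
  have hM : 0 < M := powerMean_pos hlam ha hb
  have hc : 0 < c := pos_of_mul_pos_left (hM.trans_le hca) ha.le
  have hk : 0 < 1 + c * δ / M := by positivity
  have hle : ∀ x, M ≤ c * x → x + δ ≤ (1 + c * δ / M) * x := by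
    intro x hcx
    have : δ ≤ c * δ / M * x := by
      rw [div_mul_eq_mul_div, le_div_iff₀ hM]
      nlinarith
    linarith
  calc powerMean α lam (a + δ) (b + δ)
        ≤ powerMean α lam ((1 + c * δ / M) * a) ((1 + c * δ / M) * b) :=
        powerMean_mono hα hlam (hle a hca) (hle b hcb)
    _ = M + c * δ := by
        rw [powerMean_mul (Ioo_subset_Icc_self hlam) hk, add_mul, one_mul, div_mul_cancel₀ _ hM.ne']

end

/-- **Estimate (3.11)**: for `α < 0` and `δ > 0`,
`M_α(a,b;λ) + δ ≤ M_α(a+δ, b+δ; λ) ≤ M_α(a,b;λ) + min(1−λ,λ)^{1/α} δ`. -/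
theorem powerMean_shift_estimate
    (lam : ℝ) (hlam : lam ∈ Set.Ioo (0 : ℝ) 1) (α : ℝ) (hα : α < 0)
    (a b : ℝ) (ha : 0 ≤ a) (hb : 0 ≤ b) (δ : ℝ) (hδ : 0 < δ) :
    powerMean α lam a b + δ ≤ powerMean α lam (a + δ) (b + δ) ∧
    powerMean α lam (a + δ) (b + δ) ≤
      powerMean α lam a b + min (1 - lam) lam ^ (1 / α) * δ := by
  refine ⟨?_, ?_⟩
  · simpa only [powerMean_self hδ.le] using powerMean_add_powerMean_le hα hlam ha hb hδ.le hδ.le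
  by_cases hab : 0 < a ∧ 0 < b
  · exact powerMean_shift_le_of_le_mul hα hlam hab.1 hab.2 hδ.le
      (powerMean_le_min_rpow_mul_left hα hlam hab.1 hab.2)
      (powerMean_le_min_rpow_mul_right hα hlam hab.1 hab.2)
  have haδ : 0 < a + δ := by linarith
  have hbδ : 0 < b + δ := by linarith
  rw [powerMean_of_not_pos hab, zero_add]
  rcases not_and_or.mp hab with ha₀ | hb₀
  · simpa only [le_antisymm (not_lt.mp ha₀) ha, zero_add] using
      powerMean_le_min_rpow_mul_left hα hlam haδ hbδ
  · simpa only [le_antisymm (not_lt.mp hb₀) hb, zero_add] using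
      powerMean_le_min_rpow_mul_right hα hlam haδ hbδ
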